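/- arXiv:1310.4365 — 5 statements merged into one kernel-verified Lean document; each statement's English description precedes it below -/
import Mathlib

section
/- Let α ∈ (0,1), let q : [0,∞) → ℝ be continuous and satisfy the Kamenev condition for some ε > 2 and t₀ > 0, and let x be a solution of the fractional differential equation (x^(α))'(t) + q(t)x(t) = 0 for t > 0. Then either x oscillates, or liminf_{t→+∞} x^(α)(t)·[x'(t) − x^(α)(t)] ≤ 0. -/
open Real MeasureTheory Filter

/-- The Caputo fractional derivative of order `α` of `h` at `t`:
`h^(α)(t) = (1/Γ(1−α)) ∫₀ᵗ h'(s) (t−s)^(−α) ds`. -/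
noncomputable def caputoDeriv (α : ℝ) (h : ℝ → ℝ) (t : ℝ) : ℝ :=
  (1 / Real.Gamma (1 - α)) * ∫ s in (0:ℝ)..t, deriv h s / (t - s) ^ α

/-- Kamenev condition: `limsup_{t→+∞} t^(−ε) ∫_{t₀}^t (t−s)^ε q(s) ds = +∞`. -/
def KamenevCondition (q : ℝ → ℝ) (ε t₀ : ℝ) : Prop :=
  ∀ M : ℝ, ∃ᶠ t in atTop, M < (1 / t ^ ε) * ∫ s in t₀..t, (t - s) ^ ε * q s

/-- `x` oscillates: there is an increasing unbounded sequence of positive points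
on which `x` takes alternately negative and positive values. -/
def Oscillates (x : ℝ → ℝ) : Prop :=
  ∃ t : ℕ → ℝ, StrictMono t ∧ Tendsto t atTop atTop ∧ (∀ n, 0 < t n) ∧
    ∀ n, x (t (2 * n)) < 0 ∧ 0 < x (t (2 * n + 1))

/-!
If `x` does not oscillate, then, replacing `x` and `x^(α)` by their negatives, `x ≥ 0` eventually.
Suppose `G = x^(α)` satisfies `G (x' - G) > 0` eventually. Then `x > 0` eventually (at a zero, `x`
would have a minimum, so `x' = 0` and `G (x' - G) = -G² ≤ 0`), and the Riccati variable `w = G / x`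
satisfies `w' = -q - G x' / x² ≤ -q - w²`. Multiplying by `(t - s)^ε`, integrating by parts over
`[T, t]` and completing the square gives
`∫_T^t (t - s)^ε q ≤ (t - T)^ε w(T) + ε² / (4 (ε - 1)) (t - T)^(ε - 1) = O(t^ε)`,
which contradicts the Kamenev condition.
-/

open Set intervalIntegral

theorem oscillates_of_frequently_neg_of_frequently_pos {x : ℝ → ℝ}
    (hneg : ∃ᶠ t in atTop, x t < 0) (hpos : ∃ᶠ t in atTop, 0 < x t) : Oscillates x := by
  have hnext : ∀ (n : ℕ) (a : ℝ), ∃ b, a + 1 < b ∧ if Even n then x b < 0 else 0 < x b := by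
    intro n a
    split_ifs
    · exact ((eventually_gt_atTop (a + 1)).and_frequently hneg).exists
    · exact ((eventually_gt_atTop (a + 1)).and_frequently hpos).exists
  choose next hnext_gt hnext_sign using hnext
  let t : ℕ → ℝ := fun n => Nat.rec (next 0 0) (fun k a => next (k + 1) a) n
  have ht_gt (n : ℕ) : n + 1 < t n := by
    induction n with
    | zero => show ((0 : ℕ) : ℝ) + 1 < next 0 0; simpa using hnext_gt 0 0
    | succ k ih => push_cast; linarith [hnext_gt (k + 1) (t k)]
  have ht_sign (n : ℕ) : if Even n then x (t n) < 0 else 0 < x (t n) := by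
    cases n with
    | zero => exact hnext_sign 0 0
    | succ k => exact hnext_sign (k + 1) (t k)
  refine ⟨t, strictMono_nat_of_lt_succ fun n => by linarith [hnext_gt (n + 1) (t n)],
    tendsto_atTop_mono (fun n => (ht_gt n).le)
      (tendsto_atTop_add_const_right _ 1 tendsto_natCast_atTop_atTop),
    fun n => by linarith [ht_gt n, (n.cast_nonneg : (0 : ℝ) ≤ n)], fun n => ⟨?_, ?_⟩⟩
  · simpa using ht_sign (2 * n)
  · simpa [Nat.not_even_two_mul_add_one] using ht_sign (2 * n + 1)

theorem eventually_nonneg_or_eventually_nonpos_of_not_oscillates {x : ℝ → ℝ}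
    (h : ¬ Oscillates x) : (∀ᶠ t in atTop, 0 ≤ x t) ∨ ∀ᶠ t in atTop, x t ≤ 0 := by
  contrapose! h
  exact oscillates_of_frequently_neg_of_frequently_pos h.1 h.2

theorem pos_of_nonneg_of_mul_deriv_sub_pos {x G : ℝ → ℝ} {T t : ℝ}
    (hx : ∀ s ≥ T, 0 ≤ x s) (hG : ∀ s ≥ T, 0 < G s * (deriv x s - G s)) (ht : T < t) :
    0 < x t := by
  refine (hx t ht.le).lt_of_ne fun hxt => ?_
  have hmin : IsLocalMin x t :=
    eventually_of_mem (Ioi_mem_nhds ht) fun s hs => hxt ▸ hx s (le_of_lt hs)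
  have hGt := hG t ht.le
  rw [hmin.deriv_eq_zero] at hGt
  nlinarith [sq_nonneg (G t)]

theorem riccati_le_zero_of_mul_sub_pos {q x G x' : ℝ} (hx : 0 < x) (hG : 0 < G * (x' - G)) :
    q + (-(q * x) * x - G * x') / x ^ 2 + (G / x) ^ 2 ≤ 0 := by
  have h : q + (-(q * x) * x - G * x') / x ^ 2 + (G / x) ^ 2 = -(G * (x' - G)) / x ^ 2 := by
    field_simp
    ring
  rw [h]
  exact div_nonpos_of_nonpos_of_nonneg (by linarith) (sq_nonneg x)

theorem neg_mul_rpow_mul_sq_le {a w ε : ℝ} (ha : 0 ≤ a) (hε : 2 ≤ ε) :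
    -(a ^ ε * w ^ 2) ≤ ε * a ^ (ε - 1) * w + ε ^ 2 / 4 * a ^ (ε - 2) := by
  have h1 : a ^ (ε - 1) = a ^ (ε - 2) * a := by
    rw [← rpow_add_one' ha (by linarith)]
    ring_nf
  have h2 : a ^ ε = a ^ (ε - 2) * a ^ 2 := by
    rw [← rpow_natCast, ← rpow_add' ha (by push_cast; linarith)]
    norm_num
  rw [h1, h2]
  nlinarith [mul_nonneg (rpow_nonneg ha (ε - 2)) (sq_nonneg (a * w + ε / 2))]

theorem integral_sub_rpow {p T t : ℝ} (hp : -1 < p) :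
    ∫ s in T..t, (t - s) ^ p = (t - T) ^ (p + 1) / (p + 1) := by
  rw [integral_comp_sub_left (fun s => s ^ p), integral_rpow (Or.inl hp), sub_self,
    zero_rpow (by linarith), sub_zero]

theorem integral_rpow_mul_le_of_riccati {q w w' : ℝ → ℝ} {ε T t : ℝ} (hε : 2 ≤ ε)
    (hTt : T ≤ t) (hw : ∀ s ∈ Icc T t, HasDerivAt w (w' s) s)
    (hw' : IntervalIntegrable w' volume T t) (hq : IntervalIntegrable q volume T t)
    (hric : ∀ s ∈ Icc T t, q s + w' s + w s ^ 2 ≤ 0) :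
    ∫ s in T..t, (t - s) ^ ε * q s ≤
      (t - T) ^ ε * w T + ε ^ 2 / (4 * (ε - 1)) * (t - T) ^ (ε - 1) := by
  set u : ℝ → ℝ := fun s => (t - s) ^ ε
  set u' : ℝ → ℝ := fun s => -(ε * (t - s) ^ (ε - 1))
  have hu (s : ℝ) : HasDerivAt u (u' s) s := by
    simpa [u, u'] using
      ((hasDerivAt_id s).const_sub t).rpow_const (p := ε) (Or.inr (by linarith))
  have hrpow {p : ℝ} (hp : 0 ≤ p) : Continuous fun s : ℝ => (t - s) ^ p :=
    (continuous_const.sub continuous_id).rpow_const fun _ => Or.inr hp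
  have hw_uIcc : ∀ s ∈ uIcc T t, HasDerivAt w (w' s) s := uIcc_of_le hTt ▸ hw
  have hu'_int : IntervalIntegrable u' volume T t :=
    ((hrpow (p := ε - 1) (by linarith)).const_smul ε).neg.intervalIntegrable _ _
  have hw_cont : ContinuousOn w (uIcc T t) :=
    fun s hs => (hw_uIcc s hs).continuousAt.continuousWithinAt
  have huw_int : IntervalIntegrable (fun s => u' s * w s + u s * w' s) volume T t :=
    (hu'_int.mul_continuousOn hw_cont).add
      (hw'.continuousOn_mul (hrpow (p := ε) (by linarith)).continuousOn)
  have hpow_int : IntervalIntegrable (fun s => ε ^ 2 / 4 * (t - s) ^ (ε - 2)) volume T t :=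
    ((hrpow (p := ε - 2) (by linarith)).const_smul (ε ^ 2 / 4)).intervalIntegrable _ _
  have hibp : ∫ s in T..t, u' s * w s + u s * w' s = u t * w t - u T * w T :=
    integral_deriv_mul_eq_sub (fun s _ => hu s) hw_uIcc hu'_int hw'
  have hbound : ∀ s ∈ Icc T t,
      u s * q s ≤ ε ^ 2 / 4 * (t - s) ^ (ε - 2) - (u' s * w s + u s * w' s) := by
    intro s hs
    have hts : 0 ≤ t - s := by linarith [hs.2]
    have hric_s := mul_le_mul_of_nonneg_left (hric s hs) (rpow_nonneg hts ε)
    have hsquare := neg_mul_rpow_mul_sq_le (w := w s) hts hε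
    simp only [u, u']
    nlinarith
  calc ∫ s in T..t, u s * q s
      ≤ ∫ s in T..t, (ε ^ 2 / 4 * (t - s) ^ (ε - 2) - (u' s * w s + u s * w' s)) :=
        integral_mono_on hTt (hq.continuousOn_mul (hrpow (p := ε) (by linarith)).continuousOn)
          (hpow_int.sub huw_int) hbound
    _ = (t - T) ^ ε * w T + ε ^ 2 / (4 * (ε - 1)) * (t - T) ^ (ε - 1) := by
        rw [integral_sub hpow_int huw_int, hibp, intervalIntegral.integral_const_mul,
          integral_sub_rpow (by linarith), show ε - 2 + 1 = ε - 1 by ring]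
        simp only [u, sub_self, zero_rpow (by linarith : ε ≠ 0)]
        field_simp
        ring

theorem integral_rpow_mul_le_mul_integral_abs {q : ℝ → ℝ} {ε a b t : ℝ} (hε : 0 ≤ ε)
    (ha : 0 ≤ a) (hab : a ≤ b) (hbt : b ≤ t) (hq : ContinuousOn q (Icc a b)) :
    ∫ s in a..b, (t - s) ^ ε * q s ≤ t ^ ε * ∫ s in a..b, |q s| := by
  rw [← intervalIntegral.integral_const_mul]
  refine integral_mono_on hab ?_ ?_ fun s hs => ?_
  · exact (((continuous_const.sub continuous_id).rpow_const fun _ => Or.inr hε).continuousOn.mul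
      hq).intervalIntegrable_of_Icc hab
  · exact (continuousOn_const.mul hq.abs).intervalIntegrable_of_Icc hab
  have hts : 0 ≤ t - s := by linarith [hs.2]
  calc (t - s) ^ ε * q s ≤ (t - s) ^ ε * |q s| :=
        mul_le_mul_of_nonneg_left (le_abs_self _) (rpow_nonneg hts ε)
    _ ≤ t ^ ε * |q s| :=
        mul_le_mul_of_nonneg_right (rpow_le_rpow hts (by linarith [hs.1]) hε) (abs_nonneg _)

theorem KamenevCondition.frequently_mul_rpow_lt {q : ℝ → ℝ} {ε t₀ : ℝ}
    (hK : KamenevCondition q ε t₀) (M : ℝ) :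
    ∃ᶠ t in atTop, M * t ^ ε < ∫ s in t₀..t, (t - s) ^ ε * q s := by
  refine ((hK M).and_eventually (eventually_gt_atTop 0)).mono fun t ⟨hM, ht⟩ => ?_
  rwa [one_div, inv_mul_eq_div, lt_div_iff₀ (rpow_pos_of_pos ht ε)] at hM

theorem not_kamenevCondition_of_integral_le {q : ℝ → ℝ} {ε t₀ T A c : ℝ} (hε : 1 ≤ ε)
    (ht₀ : 0 ≤ t₀) (ht₀T : t₀ ≤ T) (hc : 0 ≤ c) (hq : ContinuousOn q (Ici 0))
    (hbound : ∀ t ≥ T,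
      ∫ s in T..t, (t - s) ^ ε * q s ≤ (t - T) ^ ε * A + c * (t - T) ^ (ε - 1)) :
    ¬ KamenevCondition q ε t₀ := by
  intro hK
  set M := (∫ s in t₀..T, |q s|) + |A| + c
  refine not_frequently.2 ?_ (hK.frequently_mul_rpow_lt M)
  filter_upwards [eventually_ge_atTop (max T 1)] with t ht
  have hTt : T ≤ t := le_of_max_le_left ht
  have ht1 : 1 ≤ t := le_of_max_le_right ht
  have hprod_int {a b : ℝ} (ha : 0 ≤ a) (hab : a ≤ b) :
      IntervalIntegrable (fun s => (t - s) ^ ε * q s) volume a b :=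
    (((continuous_const.sub continuous_id).rpow_const fun _ => Or.inr (by linarith)).continuousOn
      |>.mul (hq.mono fun s hs => le_trans ha hs.1)).intervalIntegrable_of_Icc hab
  rw [not_lt, ← integral_add_adjacent_intervals (hprod_int ht₀ ht₀T)
    (hprod_int (ht₀.trans ht₀T) hTt)]
  have hinitial := integral_rpow_mul_le_mul_integral_abs (ε := ε) (t := t) (by linarith) ht₀ ht₀T
    hTt (hq.mono fun s hs => ht₀.trans hs.1)
  have hA : (t - T) ^ ε * A ≤ t ^ ε * |A| :=
    (mul_le_mul_of_nonneg_left (le_abs_self _) (rpow_nonneg (by linarith) ε)).trans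
      (mul_le_mul_of_nonneg_right (rpow_le_rpow (by linarith) (by linarith) (by linarith))
        (abs_nonneg _))
  have hc : c * (t - T) ^ (ε - 1) ≤ c * t ^ ε :=
    mul_le_mul_of_nonneg_left ((rpow_le_rpow (by linarith) (by linarith) (by linarith)).trans
      (rpow_le_rpow_of_exponent_le ht1 (by linarith))) hc
  have hM : M * t ^ ε = t ^ ε * (∫ s in t₀..T, |q s|) + t ^ ε * |A| + c * t ^ ε := by ring
  linarith [hbound t hTt]

theorem not_kamenevCondition_of_eventually_nonneg {q x G : ℝ → ℝ} {ε t₀ : ℝ} (hε : 2 < ε)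
    (ht₀ : 0 < t₀) (hq : ContinuousOn q (Ici 0)) (hx : ContDiffOn ℝ 1 x (Ici 0))
    (hG : ∀ t > 0, HasDerivAt G (-(q t * x t)) t) (hx_nonneg : ∀ᶠ t in atTop, 0 ≤ x t)
    (hGx : ∀ᶠ t in atTop, 0 < G t * (deriv x t - G t)) : ¬ KamenevCondition q ε t₀ := by
  obtain ⟨T₀, hT₀⟩ := (hx_nonneg.and hGx).exists_forall_of_atTop
  set T := max T₀ t₀ + 1
  have hT₀T : T₀ < T := by linarith [le_max_left T₀ t₀]
  have ht₀T : t₀ ≤ T := by linarith [le_max_right T₀ t₀]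
  have hx_pos : ∀ s ≥ T, 0 < x s := fun s hs =>
    pos_of_nonneg_of_mul_deriv_sub_pos (fun s hs => (hT₀ s hs).1) (fun s hs => (hT₀ s hs).2)
      (hT₀T.trans_le hs)
  have hx_deriv : ∀ s > 0, HasDerivAt x (deriv x s) s := fun s hs =>
    ((hx.differentiableOn one_ne_zero).differentiableAt (Ici_mem_nhds hs)).hasDerivAt
  have hx'_cont : ContinuousOn (deriv x) (Ioi 0) :=
    (hx.mono Ioi_subset_Ici_self).continuousOn_deriv_of_isOpen isOpen_Ioi le_rfl
  have hG_cont : ContinuousOn G (Ioi 0) := fun s hs => (hG s hs).continuousAt.continuousWithinAt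
  refine not_kamenevCondition_of_integral_le (A := G T / x T) (c := ε ^ 2 / (4 * (ε - 1)))
    (by linarith) ht₀.le ht₀T (div_nonneg (sq_nonneg ε) (by linarith)) hq fun t ht => ?_
  have hIcc : Icc T t ⊆ Ioi 0 := fun s hs => by simp only [mem_Ioi]; linarith [hs.1]
  have hq_cont : ContinuousOn q (Icc T t) := hq.mono (hIcc.trans Ioi_subset_Ici_self)
  have hx_cont : ContinuousOn x (Icc T t) := hx.continuousOn.mono (hIcc.trans Ioi_subset_Ici_self)
  refine integral_rpow_mul_le_of_riccati (w := fun s => G s / x s) hε.le ht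
    (fun s hs => (hG s (hIcc hs)).div (hx_deriv s (hIcc hs)) (hx_pos s hs.1).ne')
    (ContinuousOn.intervalIntegrable_of_Icc ht ?_) (hq_cont.intervalIntegrable_of_Icc ht)
    fun s hs => riccati_le_zero_of_mul_sub_pos (hx_pos s hs.1) (hT₀ s (hT₀T.le.trans hs.1)).2
  exact (((hq_cont.mul hx_cont).neg.mul hx_cont).sub
    ((hG_cont.mono hIcc).mul (hx'_cont.mono hIcc))).div (hx_cont.pow 2)
      fun s hs => pow_ne_zero 2 (hx_pos s hs.1).ne'

theorem kamenev_type_oscillation_liminf_general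
    (α ε t₀ : ℝ) (hε : 2 < ε) (ht₀ : 0 < t₀)
    (q x : ℝ → ℝ) (hq : ContinuousOn q (Set.Ici (0:ℝ)))
    (hK : KamenevCondition q ε t₀)
    (hx : ContDiffOn ℝ 1 x (Set.Ici (0:ℝ)))
    (heq : ∀ t > (0:ℝ), HasDerivAt (caputoDeriv α x) (-(q t * x t)) t) :
    Oscillates x ∨
      Filter.liminf
        (fun t => ((caputoDeriv α x t * (deriv x t - caputoDeriv α x t) : ℝ) : EReal))
        Filter.atTop ≤ (0 : EReal) := by
  refine or_iff_not_imp_left.2 fun hosc => le_of_not_gt fun hlim => ?_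
  have hGx : ∀ᶠ t in atTop, 0 < caputoDeriv α x t * (deriv x t - caputoDeriv α x t) :=
    (eventually_lt_of_lt_liminf hlim).mono fun t ht => EReal.coe_pos.1 ht
  rcases eventually_nonneg_or_eventually_nonpos_of_not_oscillates hosc with hpos | hneg
  · exact not_kamenevCondition_of_eventually_nonneg hε ht₀ hq hx heq hpos hGx hK
  · refine not_kamenevCondition_of_eventually_nonneg (x := -x) (G := -caputoDeriv α x) hε ht₀
      hq hx.neg (fun t ht => by simpa using (heq t ht).neg) (hneg.mono fun t => neg_nonneg.2)
      ?_ hK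
    filter_upwards [hGx] with t ht
    convert ht using 1
    simp only [Pi.neg_apply, deriv.neg']
    ring

theorem kamenev_type_oscillation_liminf
    (α ε t₀ : ℝ) (hα : α ∈ Set.Ioo (0:ℝ) 1) (hε : 2 < ε) (ht₀ : 0 < t₀)
    (q x : ℝ → ℝ) (hq : ContinuousOn q (Set.Ici (0:ℝ)))
    (hK : KamenevCondition q ε t₀)
    (hx : ContDiffOn ℝ 1 x (Set.Ici (0:ℝ)))
    (heq : ∀ t > (0:ℝ), HasDerivAt (caputoDeriv α x) (-(q t * x t)) t) :
    Oscillates x ∨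
      Filter.liminf
        (fun t => ((caputoDeriv α x t * (deriv x t - caputoDeriv α x t) : ℝ) : EReal))
        Filter.atTop ≤ (0 : EReal) :=
  kamenev_type_oscillation_liminf_general α ε t₀ hε ht₀ q x hq hK hx heq
end

section
/- Let α ∈ (0,1), let q : [0,∞) → ℝ be continuous, and let x be a solution of the fractional differential equation (x^(α))'(t) + q(t)x(t) = 0 for t > 0 such that x(t) > 0 for all t ≥ T (for some T > 0) and x^(α)(t)·[x'(t) − x^(α)(t)] ≥ 0 for all t ≥ T. Then the function w defined by w(t) = x^(α)(t)/x(t) satisfies the Riccati differential inequality w'(t) + [w(t)]² + q(t) ≤ 0 for every t ≥ T. -/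
open Real MeasureTheory Filter

/-! The Riccati substitution `w = D / x` only uses that `D' = -q x`: the quotient rule gives
`w' + w² + q = -D (x' - D) / x²`, which is nonpositive as soon as `D (x' - D) ≥ 0`. -/

theorem deriv_div_add_sq_add_eq {D x : ℝ → ℝ} {q x' t : ℝ}
    (hD : HasDerivAt D (-(q * x t)) t) (hx : HasDerivAt x x' t) (hxt : x t ≠ 0) :
    deriv (fun s => D s / x s) t + (D t / x t) ^ 2 + q = -(D t * (x' - D t)) / x t ^ 2 := by
  have hquot : HasDerivAt (fun s => D s / x s) ((-(q * x t) * x t - D t * x') / x t ^ 2) t :=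
    hD.div hx hxt
  rw [hquot.deriv]
  field_simp
  ring

theorem deriv_div_add_sq_add_nonpos {D x : ℝ → ℝ} {q x' t : ℝ}
    (hD : HasDerivAt D (-(q * x t)) t) (hx : HasDerivAt x x' t) (hxt : x t ≠ 0)
    (hsign : 0 ≤ D t * (x' - D t)) :
    deriv (fun s => D s / x s) t + (D t / x t) ^ 2 + q ≤ 0 := by
  rw [deriv_div_add_sq_add_eq hD hx hxt]
  exact div_nonpos_of_nonpos_of_nonneg (neg_nonpos.mpr hsign) (sq_nonneg _)

theorem riccati_inequality_for_nonoscillatory_solution_general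
    (α T : ℝ) (hT : 0 < T)
    (q x : ℝ → ℝ)
    (hx : ContDiffOn ℝ 1 x (Set.Ici (0:ℝ)))
    (heq : ∀ t > (0:ℝ), HasDerivAt (caputoDeriv α x) (-(q t * x t)) t)
    (hxpos : ∀ t ≥ T, 0 < x t)
    (hsign : ∀ t ≥ T, 0 ≤ caputoDeriv α x t * (deriv x t - caputoDeriv α x t)) :
    ∀ t ≥ T,
      deriv (fun s => caputoDeriv α x s / x s) t
          + (caputoDeriv α x t / x t) ^ 2 + q t ≤ 0 := by
  intro t ht
  have ht0 : 0 < t := hT.trans_le ht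
  have hxd : HasDerivAt x (deriv x t) t :=
    ((hx.differentiableOn one_ne_zero).differentiableAt (Ici_mem_nhds ht0)).hasDerivAt
  exact deriv_div_add_sq_add_nonpos (heq t ht0) hxd (hxpos t ht).ne' (hsign t ht)

theorem riccati_inequality_for_nonoscillatory_solution
    (α T : ℝ) (hα : α ∈ Set.Ioo (0:ℝ) 1) (hT : 0 < T)
    (q x : ℝ → ℝ) (hq : ContinuousOn q (Set.Ici (0:ℝ)))
    (hx : ContDiffOn ℝ 1 x (Set.Ici (0:ℝ)))
    (heq : ∀ t > (0:ℝ), HasDerivAt (caputoDeriv α x) (-(q t * x t)) t)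
    (hxpos : ∀ t ≥ T, 0 < x t)
    (hsign : ∀ t ≥ T, 0 ≤ caputoDeriv α x t * (deriv x t - caputoDeriv α x t)) :
    ∀ t ≥ T,
      deriv (fun s => caputoDeriv α x s / x s) t
          + (caputoDeriv α x t / x t) ^ 2 + q t ≤ 0 :=
  riccati_inequality_for_nonoscillatory_solution_general α T hT q x hx heq hxpos hsign
end

section
/- Let ε > 2, T > 0, let q : [0,∞) → ℝ be continuous, and let w : [T,∞) → ℝ be differentiable with w'(t) + [w(t)]² + q(t) ≤ 0 for all t ≥ T. Then for every t ≥ T, ∫_T^t (t−s)^ε q(s) ds ≤ |w(T)|·(t−T)^ε + (ε²/(4(ε−1)))·(t−T)^{ε−1}; in particular, t^{−ε} ∫_T^t (t−s)^ε q(s) ds ≤ |w(T)| + ε²/(4(ε−1)t) for all t ≥ T. -/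
open Real MeasureTheory Filter

/-!
Multiply the Riccati inequality by the weight `(t - s)^ε`. Since
`(t - s)^ε w' = ((t - s)^ε w)' + ε (t - s)^(ε-1) w`, completing the square in `w` gives
`(t - s)^ε q ≤ -((t - s)^ε w)' + (ε²/4) (t - s)^(ε-2)`, and integrating over `[T, t]` yields the
first estimate; the weight vanishes at `s = t`, so only the boundary term at `T` survives.
Dividing by `t^ε` and using `t - T ≤ t` gives the second.
-/

open Set

lemma neg_rpow_mul_sq_sub_le {x : ℝ} (hx : 0 < x) (ε w : ℝ) :
    -(x ^ ε * w ^ 2) - ε * x ^ (ε - 1) * w ≤ ε ^ 2 / 4 * x ^ (ε - 2) := by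
  have hpow : x ^ ε = x ^ (ε - 2) * x ^ 2 := by
    rw [← rpow_natCast, ← rpow_add hx]; norm_num
  have hpow₁ : x ^ (ε - 1) = x ^ (ε - 2) * x := by
    rw [← rpow_add_one hx.ne']; ring_nf
  rw [hpow, hpow₁]
  nlinarith [mul_nonneg (rpow_nonneg hx.le (ε - 2)) (sq_nonneg (x * w + ε / 2))]

lemma hasDerivAt_sub_rpow {t s p : ℝ} (hs : s ≠ t) :
    HasDerivAt (fun u => (t - u) ^ p) (-(p * (t - s) ^ (p - 1))) s := by
  convert ((hasDerivAt_id' s).const_sub t).rpow_const (p := p) (Or.inl (sub_ne_zero.2 hs.symm))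
    using 1
  ring

theorem riccati_weighted_integral_le {ε T t : ℝ} {q w w' : ℝ → ℝ} (hε : 1 < ε) (hTt : T ≤ t)
    (hq : ContinuousOn q (Icc T t)) (hwc : ContinuousOn w (Icc T t))
    (hw : ∀ s ∈ Ioo T t, HasDerivAt w (w' s) s)
    (hRic : ∀ s ∈ Ioo T t, w' s + w s ^ 2 + q s ≤ 0) :
    ∫ s in T..t, (t - s) ^ ε * q s ≤
      (t - T) ^ ε * w T + ε ^ 2 / (4 * (ε - 1)) * (t - T) ^ (ε - 1) := by
  set c := ε ^ 2 / (4 * (ε - 1))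
  have hc : c * (ε - 1) = ε ^ 2 / 4 := by
    have : ε - 1 ≠ 0 := by linarith
    simp only [c]
    field_simp
  have hweight : ∀ p : ℝ, 0 < p → Continuous fun s : ℝ => (t - s) ^ p := fun p hp =>
    (continuous_sub_left t).rpow_const fun _ => Or.inr hp.le
  set G : ℝ → ℝ := fun s => -((t - s) ^ ε * w s) - c * (t - s) ^ (ε - 1)
  have hGcont : ContinuousOn G (Icc T t) :=
    (((hweight ε (by linarith)).continuousOn.mul hwc).neg).sub
      ((hweight (ε - 1) (by linarith)).continuousOn.const_mul c)
  have hGderiv : ∀ s ∈ Ioo T t, HasDerivAt G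
      (ε * (t - s) ^ (ε - 1) * w s - (t - s) ^ ε * w' s + ε ^ 2 / 4 * (t - s) ^ (ε - 2)) s := by
    intro s hs
    refine (((hasDerivAt_sub_rpow hs.2.ne).mul (hw s hs)).neg.sub
      ((hasDerivAt_sub_rpow hs.2.ne).const_mul c)).congr_deriv ?_
    rw [show ε - 1 - 1 = ε - 2 by ring]
    linear_combination (t - s) ^ (ε - 2) * hc
  have hle : ∀ s ∈ Ioo T t, (t - s) ^ ε * q s ≤
      ε * (t - s) ^ (ε - 1) * w s - (t - s) ^ ε * w' s + ε ^ 2 / 4 * (t - s) ^ (ε - 2) := by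
    intro s hs
    have hx : 0 < t - s := sub_pos.2 hs.2
    have hRic' := mul_nonpos_of_nonneg_of_nonpos (rpow_nonneg hx.le ε) (hRic s hs)
    linear_combination neg_rpow_mul_sq_sub_le hx ε (w s) + hRic'
  have key := intervalIntegral.integral_le_sub_of_hasDeriv_right_of_le hTt hGcont
    (fun s hs => (hGderiv s hs).hasDerivWithinAt)
    (((hweight ε (by linarith)).continuousOn.mul hq).integrableOn_Icc) hle
  simpa [G, add_comm, zero_rpow (by linarith : ε ≠ 0), zero_rpow (by linarith : ε - 1 ≠ 0)]
    using key

lemma one_div_rpow_mul_le_of_le {ε T t a c I : ℝ} (hT : 0 < T) (hTt : T ≤ t) (hε : 1 ≤ ε)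
    (ha : 0 ≤ a) (hc : 0 ≤ c) (hI : I ≤ a * (t - T) ^ ε + c * (t - T) ^ (ε - 1)) :
    1 / t ^ ε * I ≤ a + c / t := by
  have ht : 0 < t := hT.trans_le hTt
  have hTt' : 0 ≤ t - T := sub_nonneg.2 hTt
  calc 1 / t ^ ε * I ≤ 1 / t ^ ε * (a * t ^ ε + c * t ^ (ε - 1)) := by
        gcongr
        refine hI.trans ?_
        gcongr <;> linarith
    _ = a + c / t := by
        rw [rpow_sub_one ht.ne']
        field_simp

theorem riccati_kamenev_averaging_estimate
    (ε T : ℝ) (hε : 2 < ε) (hT : 0 < T)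
    (q w : ℝ → ℝ) (hq : ContinuousOn q (Set.Ici (0:ℝ)))
    (hw : ∀ t ≥ T, DifferentiableAt ℝ w t)
    (hRic : ∀ t ≥ T, deriv w t + (w t) ^ 2 + q t ≤ 0) :
    (∀ t ≥ T,
      (∫ s in T..t, (t - s) ^ ε * q s) ≤
        |w T| * (t - T) ^ ε + ε ^ 2 / (4 * (ε - 1)) * (t - T) ^ (ε - 1)) ∧
    ∀ t ≥ T,
      (1 / t ^ ε) * ∫ s in T..t, (t - s) ^ ε * q s ≤
        |w T| + ε ^ 2 / (4 * (ε - 1) * t) := by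
  have hc : 0 ≤ ε ^ 2 / (4 * (ε - 1)) := by
    have : 0 < ε - 1 := by linarith
    positivity
  have key : ∀ t ≥ T, (∫ s in T..t, (t - s) ^ ε * q s) ≤
      |w T| * (t - T) ^ ε + ε ^ 2 / (4 * (ε - 1)) * (t - T) ^ (ε - 1) := by
    intro t ht
    have h := riccati_weighted_integral_le (w' := deriv w) (show 1 < ε by linarith) ht
      (hq.mono fun s hs => hT.le.trans hs.1)
      (fun s hs => (hw s hs.1).continuousAt.continuousWithinAt)
      (fun s hs => (hw s hs.1.le).hasDerivAt) (fun s hs => hRic s hs.1.le)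
    nlinarith [le_abs_self (w T), rpow_nonneg (sub_nonneg.2 ht) ε]
  refine ⟨key, fun t ht => ?_⟩
  rw [← div_div]
  exact one_div_rpow_mul_le_of_le hT ht (by linarith) (abs_nonneg _) hc (key t ht)
end

section
/- Let α ∈ (0,1), let q : [0,∞) → ℝ be continuous with q(t) > 0 for all t ≥ 0 and ∫₀^{+∞} q(t) dt = +∞, and let x be a solution of the fractional differential equation (x^(α))'(t) + q(t)x(t) = 0 for t > 0 with x(t) > 0 for all t ≥ T (for some T > 0). Then it is not the case that x^(α)(t)·[x'(t) − x^(α)(t)] ≥ 0 for all t ≥ T; i.e., there exists t ≥ T with x^(α)(t)·[x'(t) − x^(α)(t)] < 0. -/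
open Real MeasureTheory Filter

/-!
Write `D = x^(α)`, so that `D' = -q x < 0` wherever `x > 0`. Suppose `D (x' - D) ≥ 0` on `[T, ∞)`.
If `D` stays positive, then `x' ≥ D > 0`, so `x ≥ x T` and `D' ≤ -x T · q`; integrating,
`D t ≤ D T - x T ∫_T^t q → -∞`, a contradiction. Otherwise `D` becomes nonpositive at some
point and, being strictly decreasing, is bounded by some `c < 0` from then on; there `x' ≤ D ≤ c`,
so `x → -∞`, contradicting `x > 0`.
-/

open Set

section Ici

variable {f f' g g' : ℝ → ℝ} {a : ℝ}

theorem monotoneOn_Ici_of_hasDerivAt_nonneg (hf : ∀ t ≥ a, HasDerivAt f (f' t) t)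
    (hf' : ∀ t > a, 0 ≤ f' t) : MonotoneOn f (Ici a) :=
  monotoneOn_of_hasDerivWithinAt_nonneg (convex_Ici a)
    (fun t ht => (hf t ht).continuousAt.continuousWithinAt)
    (fun t ht => (hf t (interior_subset ht)).hasDerivWithinAt)
    (fun t ht => hf' t (by simpa using ht))

theorem antitoneOn_Ici_of_hasDerivAt_nonpos (hf : ∀ t ≥ a, HasDerivAt f (f' t) t)
    (hf' : ∀ t > a, f' t ≤ 0) : AntitoneOn f (Ici a) :=
  antitoneOn_of_hasDerivWithinAt_nonpos (convex_Ici a)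
    (fun t ht => (hf t ht).continuousAt.continuousWithinAt)
    (fun t ht => (hf t (interior_subset ht)).hasDerivWithinAt)
    (fun t ht => hf' t (by simpa using ht))

theorem strictAntiOn_Ici_of_hasDerivAt_neg (hf : ∀ t ≥ a, HasDerivAt f (f' t) t)
    (hf' : ∀ t > a, f' t < 0) : StrictAntiOn f (Ici a) :=
  strictAntiOn_of_hasDerivWithinAt_neg (convex_Ici a)
    (fun t ht => (hf t ht).continuousAt.continuousWithinAt)
    (fun t ht => (hf t (interior_subset ht)).hasDerivWithinAt)
    (fun t ht => hf' t (by simpa using ht))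

theorem tendsto_atBot_of_hasDerivAt_le (hf : ∀ t ≥ a, HasDerivAt f (f' t) t)
    (hg : ∀ t ≥ a, HasDerivAt g (g' t) t) (hle : ∀ t > a, f' t ≤ g' t)
    (hg_lim : Tendsto g atTop atBot) : Tendsto f atTop atBot := by
  have hanti : AntitoneOn (f - g) (Ici a) :=
    antitoneOn_Ici_of_hasDerivAt_nonpos (fun t ht => (hf t ht).sub (hg t ht))
      (fun t ht => sub_nonpos.2 (hle t ht))
  refine tendsto_atBot_mono' atTop ?_ (tendsto_atBot_add_const_right atTop (f a - g a) hg_lim)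
  filter_upwards [eventually_ge_atTop a] with t ht
  have := hanti self_mem_Ici ht ht
  simp only [Pi.sub_apply] at this
  linarith

theorem hasDerivAt_integral_of_continuousOn_Ici {q : ℝ → ℝ} {t : ℝ} (hq : ContinuousOn q (Ici a))
    (ht : a < t) : HasDerivAt (fun u => ∫ s in a..u, q s) (q t) t :=
  intervalIntegral.integral_hasDerivAt_right
    (hq.mono (uIcc_of_le ht.le ▸ Icc_subset_Ici_self)).intervalIntegrable
    (hq.mono Ioi_subset_Ici_self |>.stronglyMeasurableAtFilter isOpen_Ioi t ht)
    (hq.continuousAt (Ici_mem_nhds ht))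

end Ici

section SignChange

variable {x x' D q Q : ℝ → ℝ} {T : ℝ}

theorem exists_nonpos_of_hasDerivAt_neg_mul (hx : ∀ t ≥ T, HasDerivAt x (x' t) t)
    (hD : ∀ t ≥ T, HasDerivAt D (-(q t * x t)) t) (hQ : ∀ t ≥ T, HasDerivAt Q (q t) t)
    (hQ_lim : Tendsto Q atTop atTop) (hq : ∀ t ≥ T, 0 ≤ q t) (hxT : 0 < x T)
    (hDx' : ∀ t ≥ T, 0 < D t → D t ≤ x' t) : ∃ t ≥ T, D t ≤ 0 := by
  by_contra! hDpos
  have hx_ge : ∀ t ≥ T, x T ≤ x t := fun t ht =>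
    monotoneOn_Ici_of_hasDerivAt_nonneg hx
      (fun s hs => (hDpos s hs.le).le.trans (hDx' s hs.le (hDpos s hs.le))) self_mem_Ici ht ht
  have hD_lim : Tendsto D atTop atBot :=
    tendsto_atBot_of_hasDerivAt_le hD (fun t ht => (hQ t ht).const_mul (-x T))
      (fun t ht => by nlinarith [hx_ge t ht.le, hq t ht.le])
      (hQ_lim.const_mul_atTop_of_neg (neg_neg_of_pos hxT))
  obtain ⟨t, hDt, htT⟩ := ((hD_lim.eventually_le_atBot 0).and (eventually_ge_atTop T)).exists
  exact (hDpos t htT).not_ge hDt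

theorem exists_neg_of_deriv_le_of_strictAntiOn (hx : ∀ t ≥ T, HasDerivAt x (x' t) t)
    (hD : StrictAntiOn D (Ici T)) (hD_nonpos : ∃ t ≥ T, D t ≤ 0)
    (hx'D : ∀ t ≥ T, D t < 0 → x' t ≤ D t) : ∃ t ≥ T, x t < 0 := by
  obtain ⟨t₁, ht₁, hDt₁⟩ := hD_nonpos
  set c := D (t₁ + 1)
  have ht₁T : T ≤ t₁ + 1 := by linarith
  have hc : c < 0 := (hD ht₁ ht₁T (by linarith)).trans_le hDt₁
  have hD_le : ∀ t ≥ t₁ + 1, D t ≤ c := fun t ht => hD.antitoneOn ht₁T (ht₁T.trans ht) ht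
  have hx_lim : Tendsto x atTop atBot :=
    tendsto_atBot_of_hasDerivAt_le (a := t₁ + 1) (g := fun t => t * c)
      (fun t ht => hx t (ht₁T.trans ht)) (fun t _ => hasDerivAt_mul_const c)
      (fun t ht => (hx'D t (ht₁T.trans ht.le) ((hD_le t ht.le).trans_lt hc)).trans
        (hD_le t ht.le))
      (tendsto_id.atTop_mul_const_of_neg hc)
  obtain ⟨t, hxt, htT⟩ := ((hx_lim.eventually_lt_atBot 0).and (eventually_ge_atTop T)).exists
  exact ⟨t, htT, hxt⟩

end SignChange

theorem eventually_positive_solution_sign_change_general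
    (α T : ℝ) (hT : 0 < T)
    (q x : ℝ → ℝ) (hq : ContinuousOn q (Set.Ici (0:ℝ)))
    (hqpos : ∀ t ≥ (0:ℝ), 0 < q t)
    (hdiv : Tendsto (fun t => ∫ s in (0:ℝ)..t, q s) atTop atTop)
    (hx : ContDiffOn ℝ 1 x (Set.Ici (0:ℝ)))
    (heq : ∀ t > (0:ℝ), HasDerivAt (caputoDeriv α x) (-(q t * x t)) t)
    (hxpos : ∀ t ≥ T, 0 < x t) :
    ∃ t ≥ T, caputoDeriv α x t * (deriv x t - caputoDeriv α x t) < 0 := by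
  by_contra! hsign
  have hT' : ∀ t ≥ T, 0 < t := fun t ht => hT.trans_le ht
  have hx' : ∀ t ≥ T, HasDerivAt x (deriv x t) t := fun t ht =>
    ((hx.contDiffAt (Ici_mem_nhds (hT' t ht))).differentiableAt one_ne_zero).hasDerivAt
  have hD : ∀ t ≥ T, HasDerivAt (caputoDeriv α x) (-(q t * x t)) t := fun t ht =>
    heq t (hT' t ht)
  have hQ : ∀ t ≥ T, HasDerivAt (fun t => ∫ s in (0:ℝ)..t, q s) (q t) t := fun t ht =>
    hasDerivAt_integral_of_continuousOn_Ici hq (hT' t ht)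
  have hD_nonpos := exists_nonpos_of_hasDerivAt_neg_mul hx' hD hQ hdiv
    (fun t ht => (hqpos t (hT' t ht).le).le) (hxpos T le_rfl)
    (fun t ht hDt => sub_nonneg.1 (nonneg_of_mul_nonneg_right (hsign t ht) hDt))
  have hD_anti := strictAntiOn_Ici_of_hasDerivAt_neg hD
    (fun t ht => neg_neg_of_pos (mul_pos (hqpos t (hT' t ht.le).le) (hxpos t ht.le)))
  obtain ⟨t, htT, hxt⟩ := exists_neg_of_deriv_le_of_strictAntiOn hx' hD_anti hD_nonpos
    (fun t ht hDt => sub_nonpos.1 (nonpos_of_mul_nonneg_right (hsign t ht) hDt))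
  exact (hxpos t htT).not_gt hxt

theorem eventually_positive_solution_sign_change
    (α T : ℝ) (hα : α ∈ Set.Ioo (0:ℝ) 1) (hT : 0 < T)
    (q x : ℝ → ℝ) (hq : ContinuousOn q (Set.Ici (0:ℝ)))
    (hqpos : ∀ t ≥ (0:ℝ), 0 < q t)
    (hdiv : Tendsto (fun t => ∫ s in (0:ℝ)..t, q s) atTop atTop)
    (hx : ContDiffOn ℝ 1 x (Set.Ici (0:ℝ)))
    (heq : ∀ t > (0:ℝ), HasDerivAt (caputoDeriv α x) (-(q t * x t)) t)
    (hxpos : ∀ t ≥ T, 0 < x t) :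
    ∃ t ≥ T, caputoDeriv α x t * (deriv x t - caputoDeriv α x t) < 0 :=
  eventually_positive_solution_sign_change_general α T hT q x hq hqpos hdiv hx heq hxpos
end

section
/- Let α ∈ (0,1), T > 0, L > 0, and let x : [0,∞) → ℝ be twice continuously differentiable with x''(t) ≤ 0 for all t ≥ T and lim_{t→+∞} x'(t) = L. Then there exists T₃ ≥ 2T such that for all t ≥ T₃: x^(α)(t) ≥ 2L > (3L/2) ≥ x'(t) ≥ L/2 > 0, and consequently x^(α)(t)·[x'(t) − x^(α)(t)] < 0 for all t ≥ T₃. -/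
open Real MeasureTheory Filter

/-!
Concavity on `[T, ∞)` and `x' → L` force `x' ≥ L` there, while `x'` is bounded below by some `-M`
on the compact `[0, T]`. Against the kernel `(t - s)^(-α)` the first part contributes
`L (t - T)^(1-α) / (1 - α)`, which grows without bound, and the second at least
`-M T (t - T)^(-α)`, which tends to `0`; so `x^(α)(t) → ∞`, while `x'(t) → L`.
-/

open Set intervalIntegral

section Kernel

variable {α : ℝ}

theorem intervalIntegrable_sub_rpow_neg (hα : α < 1) (t a b : ℝ) :
    IntervalIntegrable (fun s => (t - s) ^ (-α)) volume a b := by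
  simpa using (intervalIntegrable_rpow' (r := -α) (a := t - a) (b := t - b)
    (by linarith)).comp_sub_left t

theorem integral_sub_rpow_neg (hα : α < 1) (t a : ℝ) :
    ∫ s in a..t, (t - s) ^ (-α) = (t - a) ^ (1 - α) / (1 - α) := by
  rw [integral_comp_sub_left (fun u => u ^ (-α)), sub_self,
    integral_rpow (Or.inl (by linarith)), zero_rpow (by linarith)]
  ring_nf

theorem integral_sub_rpow_neg_le (hα₀ : 0 ≤ α) (hα₁ : α < 1) {a b t : ℝ} (hab : a ≤ b)
    (hbt : b < t) :
    ∫ s in a..b, (t - s) ^ (-α) ≤ (b - a) * (t - b) ^ (-α) := by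
  calc ∫ s in a..b, (t - s) ^ (-α) ≤ ∫ _ in a..b, (t - b) ^ (-α) :=
        integral_mono_on hab (intervalIntegrable_sub_rpow_neg hα₁ t a b)
          intervalIntegrable_const fun s hs =>
            rpow_le_rpow_of_nonpos (by linarith) (by linarith [hs.2]) (by linarith)
    _ = (b - a) * (t - b) ^ (-α) := by simp

theorem le_integral_mul_sub_rpow_neg {a b t L M : ℝ} {f : ℝ → ℝ} (hα₀ : 0 ≤ α)
    (hα₁ : α < 1) (hab : a ≤ b) (hbt : b < t) (hf : ContinuousOn f (Icc a t))
    (hlow : ∀ s ∈ Icc a b, -M ≤ f s) (hM : 0 ≤ M) (hhigh : ∀ s ∈ Icc b t, L ≤ f s) :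
    L * ((t - b) ^ (1 - α) / (1 - α)) - M * ((b - a) * (t - b) ^ (-α)) ≤
      ∫ s in a..t, f s * (t - s) ^ (-α) := by
  have hint : ∀ c ∈ Icc a t, ∀ d ∈ Icc a t,
      IntervalIntegrable (fun s => f s * (t - s) ^ (-α)) volume c d := fun c hc d hd =>
    (intervalIntegrable_sub_rpow_neg hα₁ t c d).continuousOn_mul
      (hf.mono (uIcc_subset_Icc hc hd))
  have ha : a ∈ Icc a t := ⟨le_rfl, by linarith⟩
  have hb : b ∈ Icc a t := ⟨hab, hbt.le⟩
  have ht : t ∈ Icc a t := ⟨by linarith, le_rfl⟩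
  have hleft : -M * ((b - a) * (t - b) ^ (-α)) ≤ ∫ s in a..b, f s * (t - s) ^ (-α) :=
    calc -M * ((b - a) * (t - b) ^ (-α))
        ≤ -M * ∫ s in a..b, (t - s) ^ (-α) :=
          mul_le_mul_of_nonpos_left (integral_sub_rpow_neg_le hα₀ hα₁ hab hbt) (by linarith)
      _ = ∫ s in a..b, -M * (t - s) ^ (-α) := (intervalIntegral.integral_const_mul _ _).symm
      _ ≤ ∫ s in a..b, f s * (t - s) ^ (-α) :=
          integral_mono_on hab ((intervalIntegrable_sub_rpow_neg hα₁ t a b).const_mul _)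
            (hint a ha b hb) fun s hs =>
              mul_le_mul_of_nonneg_right (hlow s hs) (rpow_nonneg (by linarith [hs.2]) _)
  have hright : L * ((t - b) ^ (1 - α) / (1 - α)) ≤ ∫ s in b..t, f s * (t - s) ^ (-α) :=
    calc L * ((t - b) ^ (1 - α) / (1 - α)) = ∫ s in b..t, L * (t - s) ^ (-α) := by
          rw [intervalIntegral.integral_const_mul, integral_sub_rpow_neg hα₁]
      _ ≤ ∫ s in b..t, f s * (t - s) ^ (-α) :=
          integral_mono_on hbt.le ((intervalIntegrable_sub_rpow_neg hα₁ t b t).const_mul _)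
            (hint b hb t ht) fun s hs =>
              mul_le_mul_of_nonneg_right (hhigh s hs) (rpow_nonneg (by linarith [hs.2]) _)
  rw [← integral_add_adjacent_intervals (hint a ha b hb) (hint b hb t ht)]
  linarith

theorem tendsto_mul_rpow_sub_mul_rpow_neg_atTop {b L M : ℝ} (hα₀ : 0 < α) (hα₁ : α < 1)
    (hL : 0 < L) (c : ℝ) :
    Tendsto (fun t => L * ((t - b) ^ (1 - α) / (1 - α)) - M * (c * (t - b) ^ (-α))) atTop
      atTop := by
  have hshift : Tendsto (fun t : ℝ => t - b) atTop atTop :=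
    tendsto_atTop_add_const_right _ _ tendsto_id
  have hgrow : Tendsto (fun t => L * ((t - b) ^ (1 - α) / (1 - α))) atTop atTop := by
    refine (((tendsto_rpow_atTop (by linarith : (0:ℝ) < 1 - α)).comp hshift).const_mul_atTop
      (div_pos hL (by linarith : (0:ℝ) < 1 - α))).congr fun t => ?_
    simp only [Function.comp]
    ring
  have hdecay : Tendsto (fun t => M * (c * (t - b) ^ (-α))) atTop (nhds (M * (c * 0))) :=
    (((tendsto_rpow_neg_atTop hα₀).comp hshift).const_mul c).const_mul M
  simpa only [sub_eq_add_neg] using hgrow.atTop_add hdecay.neg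

end Kernel

theorem antitoneOn_deriv_of_deriv_deriv_nonpos {x : ℝ → ℝ} {a T : ℝ}
    (hx : ContDiffOn ℝ 2 x (Ioi a)) (haT : a < T) (hconc : ∀ t > T, deriv (deriv x) t ≤ 0) :
    AntitoneOn (deriv x) (Ici T) := by
  have hx' : ContDiffOn ℝ 1 (deriv x) (Ioi a) := hx.deriv_of_isOpen isOpen_Ioi (by norm_num)
  have hTa : Ici T ⊆ Ioi a := fun s hs => haT.trans_le hs
  refine antitoneOn_of_deriv_nonpos (convex_Ici T) (hx'.continuousOn.mono hTa) ?_ ?_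
  · exact (hx'.differentiableOn one_ne_zero).mono (interior_subset.trans hTa)
  · rw [interior_Ici]
    exact hconc

theorem AntitoneOn.le_of_tendsto {ι β : Type*} [Preorder ι] [IsDirectedOrder ι] [Nonempty ι]
    [TopologicalSpace β] [Preorder β] [OrderClosedTopology β] {f : ι → β} {a : ι} {L : β}
    (hf : AntitoneOn f (Ici a)) (hlim : Tendsto f atTop (nhds L)) {s : ι} (hs : a ≤ s) :
    L ≤ f s :=
  _root_.le_of_tendsto hlim <| (eventually_ge_atTop s).mono fun _ hu => hf hs (hs.trans hu) hu

theorem caputoDeriv_eq_integral_derivWithin (α : ℝ) (h : ℝ → ℝ) {t : ℝ} (ht : 0 ≤ t) :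
    caputoDeriv α h t =
      (1 / Gamma (1 - α)) * ∫ s in (0:ℝ)..t, derivWithin h (Ici 0) s * (t - s) ^ (-α) := by
  unfold caputoDeriv
  congr 1
  refine integral_congr_ae (Eventually.of_forall fun s hs => ?_)
  rw [uIoc_of_le ht] at hs
  rw [derivWithin_of_mem_nhds (Ici_mem_nhds hs.1), rpow_neg (by linarith [hs.2]), div_eq_mul_inv]

theorem tendsto_caputoDeriv_atTop {α T L : ℝ} {x : ℝ → ℝ} (hα₀ : 0 < α) (hα₁ : α < 1)
    (hT : 0 < T) (hL : 0 < L) (hx : ContDiffOn ℝ 1 x (Ici 0)) (hlower : ∀ s ≥ T, L ≤ deriv x s) :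
    Tendsto (caputoDeriv α x) atTop atTop := by
  -- `deriv x` may be junk at `0`; its one-sided version is continuous on `[0, ∞)`.
  have hg : ContinuousOn (derivWithin x (Ici 0)) (Ici 0) :=
    hx.continuousOn_derivWithin (uniqueDiffOn_Ici 0) le_rfl
  obtain ⟨m, hm⟩ := isCompact_Icc.bddBelow_image (hg.mono (Icc_subset_Ici_self : Icc 0 T ⊆ _))
  have hΓ : 0 < 1 / Gamma (1 - α) := one_div_pos.2 (Gamma_pos_of_pos (by linarith))
  have hbound := (tendsto_mul_rpow_sub_mul_rpow_neg_atTop (b := T) (M := |m|) hα₀ hα₁ hL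
    (T - 0)).const_mul_atTop hΓ
  refine tendsto_atTop_mono' _ ((eventually_gt_atTop T).mono fun t ht => ?_) hbound
  rw [caputoDeriv_eq_integral_derivWithin α x (hT.le.trans ht.le)]
  refine mul_le_mul_of_nonneg_left (le_integral_mul_sub_rpow_neg hα₀.le hα₁ hT.le ht
    (hg.mono Icc_subset_Ici_self) (fun s hs => ?_) (abs_nonneg m) (fun s hs => ?_)) hΓ.le
  · exact (neg_abs_le m).trans (hm ⟨s, hs, rfl⟩)
  · rw [derivWithin_of_mem_nhds (Ici_mem_nhds (hT.trans_le hs.1))]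
    exact hlower s hs.1

theorem caputo_eventually_dominates_derivative
    (α T L : ℝ) (hα : α ∈ Set.Ioo (0:ℝ) 1) (hT : 0 < T) (hL : 0 < L)
    (x : ℝ → ℝ) (hx : ContDiffOn ℝ 2 x (Set.Ici (0:ℝ)))
    (hconc : ∀ t ≥ T, deriv (deriv x) t ≤ 0)
    (hlim : Tendsto (deriv x) atTop (nhds L)) :
    ∃ T₃ ≥ 2 * T, ∀ t ≥ T₃,
      (caputoDeriv α x t ≥ 2 * L ∧ 2 * L > 3 * L / 2 ∧
        3 * L / 2 ≥ deriv x t ∧ deriv x t ≥ L / 2 ∧ L / 2 > 0) ∧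
      caputoDeriv α x t * (deriv x t - caputoDeriv α x t) < 0 := by
  obtain ⟨hα₀, hα₁⟩ := hα
  have hanti : AntitoneOn (deriv x) (Ici T) := antitoneOn_deriv_of_deriv_deriv_nonpos
    (hx.mono Ioi_subset_Ici_self) hT fun t ht => hconc t ht.le
  have hlower : ∀ s ≥ T, L ≤ deriv x s := fun s hs => hanti.le_of_tendsto hlim hs
  have hcaputo := tendsto_caputoDeriv_atTop hα₀ hα₁ hT hL (hx.of_le (by norm_num)) hlower
  have hupper : ∀ᶠ t in atTop, deriv x t ≤ 3 * L / 2 :=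
    hlim.eventually (ge_mem_nhds (by linarith))
  obtain ⟨T₀, hT₀⟩ := eventually_atTop.1 ((hcaputo.eventually_ge_atTop (2 * L)).and hupper)
  refine ⟨max T₀ (2 * T), le_max_right _ _, fun t ht => ?_⟩
  obtain ⟨hcap, hupper⟩ := hT₀ t (le_of_max_le_left ht)
  have hlower := hlower t (by linarith [le_of_max_le_right ht])
  exact ⟨⟨hcap, by linarith, hupper, by linarith, by linarith⟩,
    mul_neg_of_pos_of_neg (by linarith) (by linarith)⟩
end
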